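/- arXiv:2111.13758 — 2 statements merged into one kernel-verified Lean document; each statement's English description precedes it below -/
import Mathlib

section
/- Let O = ⋂_{n∈ℕ⁺} A_{α_n,β_n}. Then the identity element 0 belongs to O, and O is a clopen subset of (𝔈, τ): both O and 𝔈 − O are open in 𝔈. -/
noncomputable section

open scoped ENNReal

/-- The ambient Hilbert space `ℓ²` of real square-summable sequences. -/
abbrev ellTwo : Type := lp (fun _ : ℕ => ℝ) 2

/-- Erdős space `𝔈`: the additive subgroup of `ℓ²` consisting of the sequences
all of whose coordinates are rational. -/
def Erdos : AddSubgroup ellTwo where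
  carrier := {x | ∀ k, ∃ q : ℚ, (x : ℕ → ℝ) k = (q : ℝ)}
  add_mem' := by
    intro a b ha hb k
    obtain ⟨p, hp⟩ := ha k
    obtain ⟨q, hq⟩ := hb k
    exact ⟨p + q, by rw [lp.coeFn_add]; simp [hp, hq]⟩
  zero_mem' := fun k => ⟨0, by simp⟩
  neg_mem' := by
    intro a ha k
    obtain ⟨p, hp⟩ := ha k
    exact ⟨-p, by rw [lp.coeFn_neg]; simp [hp]⟩

/-- Erdős space as a type (with the subspace topology and norm inherited from `ℓ²`). -/
abbrev ErdosSpace : Type := ↥Erdos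

/-- The coordinates of a point of Erdős space (indexed from `0`, so that the
coordinate `x_k` of the paper is `coords x (k-1)`). -/
def coords (x : ErdosSpace) : ℕ → ℝ := ((x : ellTwo) : ℕ → ℝ)

/-- `mExists x α` says that `m_{x,α}` exists, i.e. some finite initial sum of squares
of coordinates exceeds `α` (here `m` counts how many initial coordinates are taken). -/
def mExists (x : ErdosSpace) (α : ℝ) : Prop :=
  ∃ m : ℕ, α < Real.sqrt (∑ k ∈ Finset.range m, (coords x k) ^ 2)

/-- `mIndex x α` is the least `m` such that `√(∑_{k<m} x_k²) > α` (and `0` if none exists);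
this corresponds to `m_{x,α}` of the paper. -/
def mIndex (x : ErdosSpace) (α : ℝ) : ℕ :=
  sInf {m : ℕ | α < Real.sqrt (∑ k ∈ Finset.range m, (coords x k) ^ 2)}

/-- The set `A_{α,β}`: those `x` for which either `m_{x,α}` exists and every coordinate
beyond the first `m_{x,α}` ones has absolute value `< β`, or `m_{x,α}` does not exist. -/
def A (α β : ℝ) : Set ErdosSpace :=
  {x | (mExists x α ∧ ∀ l, mIndex x α ≤ l → |coords x l| < β) ∨ ¬mExists x α}


-- helpers
def Ssum (x : ErdosSpace) (m : ℕ) : ℝ := ∑ k ∈ Finset.range m, (coords x k) ^ 2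

lemma mExists_iff (x : ErdosSpace) (α : ℝ) : mExists x α ↔ ∃ m, α < Real.sqrt (Ssum x m) := Iff.rfl

lemma mIndex_def (x : ErdosSpace) (α : ℝ) : mIndex x α = sInf {m | α < Real.sqrt (Ssum x m)} := rfl

lemma Ssum_nonneg (x : ErdosSpace) (m : ℕ) : 0 ≤ Ssum x m :=
  Finset.sum_nonneg fun k _ => sq_nonneg _

lemma summable_sq (x : ErdosSpace) : Summable fun k => (coords x k) ^ 2 := by
  have h := (lp.memℓp (x : ellTwo)).summable (by norm_num : 0 < (2 : ℝ≥0∞).toReal)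
  simp only [ENNReal.toReal_ofNat] at h
  rw [show ((2:ℝ)) = ((2:ℕ):ℝ) by norm_num] at h
  simp only [Real.rpow_natCast] at h
  exact h.congr fun k => by rw [Real.norm_eq_abs, sq_abs]; rfl

lemma norm_sq_eq (x : ErdosSpace) : ‖(x : ellTwo)‖ ^ 2 = ∑' k, (coords x k) ^ 2 := by
  have h := lp.norm_rpow_eq_tsum (p := 2) (by norm_num) (x : ellTwo)
  simp only [ENNReal.toReal_ofNat] at h
  rw [show ((2:ℝ)) = ((2:ℕ):ℝ) by norm_num] at h
  simp only [Real.rpow_natCast] at h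
  rw [h]
  congr 1
  funext k
  rw [Real.norm_eq_abs, sq_abs]
  rfl

lemma Ssum_le (x : ErdosSpace) (m : ℕ) : Ssum x m ≤ ‖(x : ellTwo)‖ ^ 2 := by
  rw [norm_sq_eq]
  exact Summable.sum_le_tsum _ (fun k _ => sq_nonneg _) (summable_sq x)

lemma sq_add_Ssum_le (x : ErdosSpace) {m l : ℕ} (h : m ≤ l) :
    (coords x l) ^ 2 + Ssum x m ≤ ‖(x : ellTwo)‖ ^ 2 := by
  rw [norm_sq_eq]
  have hnot : l ∉ Finset.range m := by simp; omega
  have heq : (coords x l) ^ 2 + Ssum x m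
      = ∑ k ∈ insert l (Finset.range m), (coords x k) ^ 2 := by
    rw [Finset.sum_insert hnot]; rfl
  rw [heq]
  exact Summable.sum_le_tsum _ (fun k _ => sq_nonneg _) (summable_sq x)

lemma Ssum_rat (x : ErdosSpace) (m : ℕ) : ∃ q : ℚ, Ssum x m = (q : ℝ) := by
  induction m with
  | zero => exact ⟨0, by simp [Ssum]⟩
  | succ n ih =>
      obtain ⟨q, hq⟩ := ih
      obtain ⟨r, hr⟩ := x.2 n
      refine ⟨q + r ^ 2, ?_⟩
      have : Ssum x (n+1) = Ssum x n + (coords x n) ^ 2 := Finset.sum_range_succ _ _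
      rw [this, hq]
      have : coords x n = (r : ℝ) := hr
      rw [this]; push_cast; ring

lemma Ssum_ne {α : ℝ} (hαI : Irrational (α ^ 2)) (x : ErdosSpace) (m : ℕ) :
    Ssum x m ≠ α ^ 2 := by
  obtain ⟨q, hq⟩ := Ssum_rat x m
  intro h
  exact hαI ⟨q, by rw [← hq, h]⟩

lemma abs_coords_sub_le (x y : ErdosSpace) (k : ℕ) :
    |coords x k - coords y k| ≤ dist x y := by
  have h := lp.norm_apply_le_norm (by norm_num : (2 : ℝ≥0∞) ≠ 0) ((x : ellTwo) - (y : ellTwo)) k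
  rw [Subtype.dist_eq, dist_eq_norm]
  refine le_trans (le_of_eq ?_) h
  rw [Real.norm_eq_abs, lp.coeFn_sub]
  rfl

lemma continuous_coords (k : ℕ) : Continuous fun x : ErdosSpace => coords x k := by
  refine (LipschitzWith.of_dist_le_mul (K := 1) fun x y => ?_).continuous
  rw [Real.dist_eq, NNReal.coe_one, one_mul]
  exact abs_coords_sub_le x y k

lemma continuous_Ssum (m : ℕ) : Continuous fun x : ErdosSpace => Ssum x m :=
  continuous_finset_sum _ fun k _ => (continuous_coords k).pow 2

lemma continuous_normSq : Continuous fun x : ErdosSpace => ‖(x : ellTwo)‖ ^ 2 :=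
  (continuous_subtype_val.norm).pow 2

lemma mIndex_spec {x : ErdosSpace} {α : ℝ} (hα : 0 ≤ α) (h : mExists x α) :
    α ^ 2 < Ssum x (mIndex x α) := by
  have hmem : mIndex x α ∈ {m | α < Real.sqrt (Ssum x m)} := Nat.sInf_mem h
  exact (Real.lt_sqrt hα).mp hmem

lemma mIndex_min {x : ErdosSpace} {α : ℝ} {j : ℕ} (h : j < mIndex x α) :
    ¬ α < Real.sqrt (Ssum x j) := Nat.notMem_of_lt_sInf h

lemma mIndex_eq {x : ErdosSpace} {α : ℝ} {m : ℕ} (hα : 0 < α)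
    (h1 : α ^ 2 < Ssum x m) (h2 : ∀ j < m, Ssum x j < α ^ 2) : mIndex x α = m := by
  have hmem : m ∈ {n | α < Real.sqrt (Ssum x n)} := (Real.lt_sqrt hα.le).mpr h1
  refine le_antisymm (Nat.sInf_le hmem) ?_
  refine le_csInf ⟨m, hmem⟩ fun j hj => ?_
  by_contra hlt
  push_neg at hlt
  have hs : Real.sqrt (Ssum x j) < α := (Real.sqrt_lt' hα).mpr (h2 j hlt)
  have hj' : α < Real.sqrt (Ssum x j) := hj
  linarith

lemma not_mExists_of_norm_le {x : ErdosSpace} {α : ℝ} (hα : 0 ≤ α)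
    (h : ‖(x : ellTwo)‖ ≤ α) : ¬ mExists x α := by
  rintro ⟨m, hm⟩
  have h1 : Ssum x m ≤ α ^ 2 :=
    le_trans (Ssum_le x m) (by nlinarith [norm_nonneg (x : ellTwo)])
  have h2 : α ^ 2 < Ssum x m := (Real.lt_sqrt hα).mp hm
  linarith

lemma normsq_le_of_not_mExists {x : ErdosSpace} {α : ℝ} (hα : 0 ≤ α)
    (h : ¬ mExists x α) : ‖(x : ellTwo)‖ ^ 2 ≤ α ^ 2 := by
  rw [norm_sq_eq]
  refine Summable.tsum_le_of_sum_range_le (summable_sq x) fun n => ?_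
  by_contra hc
  push_neg at hc
  exact h ⟨n, (Real.lt_sqrt hα).mpr hc⟩

lemma abs_lt_of_sq_lt {u β : ℝ} (hβ : 0 < β) (h : u ^ 2 < β ^ 2) : |u| < β := by
  rw [← Real.sqrt_sq_eq_abs, ← Real.sqrt_sq hβ.le]
  exact Real.sqrt_lt_sqrt (sq_nonneg _) h

lemma mIndex_facts {x : ErdosSpace} {α : ℝ} (hα : 0 < α) (hαI : Irrational (α ^ 2))
    (hex : mExists x α) :
    α ^ 2 < Ssum x (mIndex x α) ∧ ∀ j < mIndex x α, Ssum x j < α ^ 2 := by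
  refine ⟨mIndex_spec hα.le hex, fun j hj => ?_⟩
  have h1 := mIndex_min hj
  have h2 : Ssum x j ≤ α ^ 2 := by
    by_contra hc
    push_neg at hc
    exact h1 ((Real.lt_sqrt hα.le).mpr hc)
  exact lt_of_le_of_ne h2 (Ssum_ne hαI x j)

lemma isOpen_A {α β : ℝ} (hα : 0 < α) (hβ : 0 < β) (hαI : Irrational (α ^ 2))
    (hβI : Irrational β) : IsOpen (A α β) := by
  rw [isOpen_iff_forall_mem_open]
  intro x hx
  rcases hx with ⟨hex, hall⟩ | hnot
  · -- mExists case
    obtain ⟨hm, hj⟩ := mIndex_facts hα hαI hex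
    set m := mIndex x α with hmdef
    -- choose M ≥ m with tail small
    have hconv : Filter.Tendsto (fun M => Ssum x M) Filter.atTop
        (nhds (‖(x : ellTwo)‖ ^ 2)) := by
      rw [norm_sq_eq]
      exact (summable_sq x).hasSum.tendsto_sum_nat
    have hltlim : ‖(x : ellTwo)‖ ^ 2 - β ^ 2 < ‖(x : ellTwo)‖ ^ 2 := by nlinarith
    have hev : ∀ᶠ M in Filter.atTop, ‖(x : ellTwo)‖ ^ 2 - β ^ 2 < Ssum x M :=
      hconv.eventually (eventually_gt_nhds hltlim)
    obtain ⟨M, hMtail, hmM⟩ := (hev.and (Filter.eventually_ge_atTop m)).exists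
    refine ⟨{y | α ^ 2 < Ssum y m} ∩ ((⋂ j ∈ Finset.range m, {y | Ssum y j < α ^ 2}) ∩
      ((⋂ l ∈ Finset.Ico m M, {y | |coords y l| < β}) ∩
        {y | ‖(y : ellTwo)‖ ^ 2 - Ssum y M < β ^ 2})), ?_, ?_, ?_⟩
    · rintro y ⟨h1, h2, h3, h4⟩
      simp only [Set.mem_iInter, Set.mem_setOf_eq] at h1 h2 h3 h4
      have hey : mExists y α := ⟨m, (Real.lt_sqrt hα.le).mpr h1⟩
      have hidx : mIndex y α = m :=
        mIndex_eq hα h1 (fun j hjm => h2 j (Finset.mem_range.mpr hjm))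
      left
      refine ⟨hey, fun l hl => ?_⟩
      rw [hidx] at hl
      by_cases hlM : l < M
      · exact h3 l (Finset.mem_Ico.mpr ⟨hl, hlM⟩)
      · push_neg at hlM
        have hle := sq_add_Ssum_le y hlM
        exact abs_lt_of_sq_lt hβ (by linarith)
    · refine IsOpen.inter (isOpen_lt continuous_const (continuous_Ssum m)) ?_
      refine IsOpen.inter (isOpen_biInter_finset fun j _ =>
        isOpen_lt (continuous_Ssum j) continuous_const) ?_
      refine IsOpen.inter (isOpen_biInter_finset fun l _ =>
        isOpen_lt ((continuous_coords l).abs) continuous_const) ?_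
      exact isOpen_lt (continuous_normSq.sub (continuous_Ssum M)) continuous_const
    · refine ⟨hm, ?_, ?_, by simp only [Set.mem_setOf_eq]; linarith⟩
      · simp only [Set.mem_iInter, Set.mem_setOf_eq]
        exact fun j hjm => hj j (Finset.mem_range.mp hjm)
      · simp only [Set.mem_iInter, Set.mem_setOf_eq]
        intro l hl
        exact hall l (Finset.mem_Ico.mp hl).1
  · -- no mExists case
    refine ⟨{y | ‖(y : ellTwo)‖ ^ 2 < α ^ 2 + β ^ 2}, ?_,
      isOpen_lt continuous_normSq continuous_const, ?_⟩
    · intro y hy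
      simp only [Set.mem_setOf_eq] at hy
      by_cases hey : mExists y α
      · left
        refine ⟨hey, fun l hl => ?_⟩
        have hm : α ^ 2 < Ssum y (mIndex y α) := mIndex_spec hα.le hey
        have hle := sq_add_Ssum_le y hl
        exact abs_lt_of_sq_lt hβ (by linarith)
      · right; exact hey
    · have := normsq_le_of_not_mExists hα.le hnot
      simp only [Set.mem_setOf_eq]
      nlinarith

lemma isOpen_compl_A {α β : ℝ} (hα : 0 < α) (hβ : 0 < β) (hαI : Irrational (α ^ 2))
    (hβI : Irrational β) : IsOpen (A α β)ᶜ := by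
  rw [isOpen_iff_forall_mem_open]
  intro x hx
  simp only [Set.mem_compl_iff, A, Set.mem_setOf_eq] at hx
  push_neg at hx
  obtain ⟨hnP, hex⟩ := hx
  obtain ⟨l, hl, hβl⟩ := hnP hex
  have hβl' : β < |coords x l| := by
    refine lt_of_le_of_ne hβl fun heq => ?_
    obtain ⟨q, hq⟩ := x.2 l
    exact hβI ⟨|q|, by rw [heq, show coords x l = (q : ℝ) from hq, ← Rat.cast_abs]⟩
  obtain ⟨hm, hj⟩ := mIndex_facts hα hαI hex
  set m := mIndex x α with hmdef
  refine ⟨{y | α ^ 2 < Ssum y m} ∩ ((⋂ j ∈ Finset.range m, {y | Ssum y j < α ^ 2}) ∩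
    {y | β < |coords y l|}), ?_, ?_, ?_⟩
  · rintro y ⟨h1, h2, h3⟩
    simp only [Set.mem_iInter, Set.mem_setOf_eq] at h1 h2 h3
    have hey : mExists y α := ⟨m, (Real.lt_sqrt hα.le).mpr h1⟩
    have hidx : mIndex y α = m :=
      mIndex_eq hα h1 (fun j hjm => h2 j (Finset.mem_range.mpr hjm))
    intro hyA
    rcases hyA with ⟨_, hall⟩ | hno
    · have := hall l (by rw [hidx]; exact hl)
      linarith
    · exact hno hey
  · refine IsOpen.inter (isOpen_lt continuous_const (continuous_Ssum m)) ?_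
    refine IsOpen.inter (isOpen_biInter_finset fun j _ =>
      isOpen_lt (continuous_Ssum j) continuous_const) ?_
    exact isOpen_lt continuous_const ((continuous_coords l).abs)
  · refine ⟨hm, ?_, hβl'⟩
    simp only [Set.mem_iInter, Set.mem_setOf_eq]
    exact fun j hjm => hj j (Finset.mem_range.mp hjm)

/-- Claim 4: for suitable sequences `(αₙ)` and `(βₙ)`, the set `O = ⋂ₙ A_{αₙ,βₙ}`
contains the identity `0` and is clopen in Erdős space. -/
theorem O_clopen (a b : ℕ → ℝ) (ha0 : ∀ n, 0 < a n) (haMono : StrictMono a)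
    (haTop : Filter.Tendsto a Filter.atTop Filter.atTop)
    (haIrr : ∀ n, Irrational ((a n) ^ 2))
    (hb0 : ∀ n, 0 < b n) (hbAnti : StrictAnti b)
    (hbLim : Filter.Tendsto b Filter.atTop (nhds 0))
    (hbIrr : ∀ n, Irrational (b n)) :
    (0 : ErdosSpace) ∈ ⋂ n, A (a n) (b n) ∧ IsClopen (⋂ n, A (a n) (b n)) := by
  have hmem0 : ∀ n, (0 : ErdosSpace) ∈ A (a n) (b n) := by
    intro n
    right
    rintro ⟨m, hm⟩
    have hc : ∀ k, coords (0 : ErdosSpace) k = 0 := by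
      intro k
      simp [coords]
    simp only [hc] at hm
    simp at hm
    exact absurd hm (not_lt.mpr (ha0 n).le)
  refine ⟨Set.mem_iInter.mpr hmem0, ?_, ?_⟩
  · -- closed
    refine isClosed_iInter fun n => ?_
    rw [← compl_compl (A (a n) (b n))]
    exact (isOpen_compl_A (ha0 n) (hb0 n) (haIrr n) (hbIrr n)).isClosed_compl
  · -- open
    rw [isOpen_iff_forall_mem_open]
    intro x hx
    obtain ⟨N, hN⟩ := Filter.eventually_atTop.mp
      (haTop.eventually_ge_atTop (‖(x : ellTwo)‖ + 1))
    have hball : ∀ n, ∃ ε > 0, Metric.ball x ε ⊆ A (a n) (b n) := fun n =>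
      Metric.isOpen_iff.mp (isOpen_A (ha0 n) (hb0 n) (haIrr n) (hbIrr n)) x
        (Set.mem_iInter.mp hx n)
    choose ε hεpos hεsub using hball
    refine ⟨Metric.ball x 1 ∩ ⋂ n ∈ Finset.range N, Metric.ball x (ε n), ?_, ?_, ?_⟩
    · rintro y ⟨hy1, hy2⟩
      simp only [Set.mem_iInter] at hy2
      refine Set.mem_iInter.mpr fun n => ?_
      by_cases hn : n < N
      · exact hεsub n (hy2 n (Finset.mem_range.mpr hn))
      · push_neg at hn
        right
        have h1 : ‖(y : ellTwo)‖ - ‖(x : ellTwo)‖ ≤ ‖(y : ellTwo) - (x : ellTwo)‖ :=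
          norm_sub_norm_le _ _
        have h2 : ‖(y : ellTwo) - (x : ellTwo)‖ < 1 := by
          have hd := Metric.mem_ball.mp hy1
          rw [Subtype.dist_eq, dist_eq_norm] at hd
          exact hd
        have h3 : ‖(x : ellTwo)‖ + 1 ≤ a n := hN n hn
        exact not_mExists_of_norm_le (ha0 n).le (by linarith)
    · exact IsOpen.inter Metric.isOpen_ball
        (isOpen_biInter_finset fun n _ => Metric.isOpen_ball)
    · exact ⟨Metric.mem_ball_self one_pos,
        Set.mem_iInter.mpr fun n => Set.mem_iInter.mpr fun _ =>
          Metric.mem_ball_self (hεpos n)⟩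
end
end

section
/- The only bounded clopen subset of Erdős space (𝔈, τ) is the empty set; equivalently, every nonempty clopen subset of 𝔈 is unbounded in norm. -/
noncomputable section

open scoped ENNReal

/-! On every coordinate axis through a point `x` of a bounded set `S ⊆ 𝔈` there is a rational
step `r` with `x + r eₙ ∈ S` but `x + (r + ε) eₙ ∉ S`. Starting at `0 ∈ S` and taking such steps
along the axes one after another, with `εₙ → 0`, gives points of `S` of bounded norm; their
coordinates are rational and square-summable, so they converge in `𝔈`, to a point of `S` if `S`
is closed. The escaping points converge to the same limit, so `S` cannot also be open. -/

open Filter Topology Bornology Finset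

theorem exists_mem_add_notMem_of_bddAbove {α : Type*} [AddCommGroup α] [LinearOrder α]
    [IsOrderedAddMonoid α] [Archimedean α] {T : Set α} (hT : BddAbove T) {a : α} (ha : a ∈ T)
    {ε : α} (hε : 0 < ε) : ∃ r ∈ T, r + ε ∉ T := by
  by_contra! h
  obtain ⟨b, hb⟩ := hT
  have hmem (n : ℕ) : a + n • ε ∈ T := by
    induction n with
    | zero => simpa
    | succ n ih => simpa [succ_nsmul, add_assoc] using h _ ih
  obtain ⟨n, hn⟩ := Archimedean.arch (b - a + ε) hε
  have : b + ε ≤ b := calc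
    b + ε = a + (b - a + ε) := by abel
    _ ≤ a + n • ε := by gcongr
    _ ≤ b := hb (hmem n)
  exact (lt_add_of_pos_right b hε).not_ge this

theorem lp.memℓp_of_norm_sum_range_single_le {E : ℕ → Type*} [∀ i, NormedAddCommGroup (E i)]
    {p : ℝ≥0∞} (hp : 0 < p.toReal) {f : ∀ i, E i} {M : ℝ}
    (hM : ∀ n, ‖∑ i ∈ range n, lp.single p i (f i)‖ ≤ M) : Memℓp f p := by
  refine memℓp_gen <|
    summable_of_sum_range_le (c := M ^ p.toReal) (fun _ => by positivity) fun n => ?_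
  rw [← lp.norm_sum_single hp]
  exact Real.rpow_le_rpow (lp.norm_nonneg' _) (hM n) hp.le

namespace ErdosSpace

def single (n : ℕ) : ℚ →+ ErdosSpace :=
  ((lp.singleAddMonoidHom 2 n).comp (Rat.castHom ℝ).toAddMonoidHom).codRestrict Erdos
    fun q k => by
      by_cases h : k = n
      · subst h; exact ⟨q, lp.single_apply_self _ _ _⟩
      · exact ⟨0, by simp [lp.singleAddMonoidHom, Pi.single_eq_of_ne h]⟩

theorem coe_single (n : ℕ) (q : ℚ) : (single n q : ellTwo) = lp.single 2 n (q : ℝ) := rfl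

theorem norm_single (n : ℕ) (q : ℚ) : ‖single n q‖ = |(q : ℝ)| := by
  rw [AddSubgroup.coe_norm, coe_single, lp.norm_single (by norm_num), Real.norm_eq_abs]

theorem exists_hasSum_single {c : ℕ → ℚ} {M : ℝ}
    (hM : ∀ n, ‖∑ k ∈ range n, single k (c k)‖ ≤ M) :
    ∃ y : ErdosSpace, HasSum (fun k => single k (c k)) y := by
  have hc : Memℓp (fun k => (c k : ℝ)) 2 :=
    lp.memℓp_of_norm_sum_range_single_le (by norm_num) fun n => by
      simpa [AddSubgroup.coe_norm, AddSubgroup.val_finsetSum, coe_single] using hM n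
  let y : ellTwo := ⟨fun k => (c k : ℝ), hc⟩
  refine ⟨⟨y, fun k => ⟨c k, rfl⟩⟩, ?_⟩
  exact ((Topology.IsInducing.subtypeVal).hasSum_iff (g := Erdos.subtype) _ _).1
    (lp.hasSum_single ENNReal.ofNat_ne_top y)

theorem exists_add_single_mem_add_single_notMem {S : Set ErdosSpace} (hS : IsBounded S)
    {x : ErdosSpace} (hx : x ∈ S) (n : ℕ) {ε : ℚ} (hε : 0 < ε) :
    ∃ r : ℚ, x + single n r ∈ S ∧ x + single n (r + ε) ∉ S := by
  obtain ⟨C, hC⟩ := isBounded_iff_forall_norm_le.1 hS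
  obtain ⟨b, hb⟩ := exists_rat_gt (C + ‖x‖)
  have hT : BddAbove {q : ℚ | x + single n q ∈ S} := by
    refine ⟨b, fun q hq => ?_⟩
    have : (q : ℝ) ≤ b := calc
      (q : ℝ) ≤ ‖single n q‖ := norm_single n q ▸ le_abs_self _
      _ = ‖(x + single n q) - x‖ := by rw [add_sub_cancel_left]
      _ ≤ ‖x + single n q‖ + ‖x‖ := norm_sub_le _ _
      _ ≤ C + ‖x‖ := by gcongr; exact hC _ hq
      _ ≤ b := hb.le
    exact_mod_cast this
  have h0 : (0 : ℚ) ∈ {q : ℚ | x + single n q ∈ S} := by simpa using hx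
  exact exists_mem_add_notMem_of_bddAbove hT h0 hε

theorem exists_sum_single_mem_add_single_notMem {S : Set ErdosSpace} (hS : IsBounded S)
    (h0 : 0 ∈ S) {ε : ℕ → ℚ} (hε : ∀ n, 0 < ε n) :
    ∃ c : ℕ → ℚ, ∀ n, ∑ k ∈ range n, single k (c k) ∈ S ∧
      ∑ k ∈ range n, single k (c k) + single n (c n + ε n) ∉ S := by
  have step (n : ℕ) (x : ErdosSpace) :
      ∃ r : ℚ, x ∈ S → x + single n r ∈ S ∧ x + single n (r + ε n) ∉ S := by
    by_cases hx : x ∈ S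
    · obtain ⟨r, hr⟩ := exists_add_single_mem_add_single_notMem hS hx n (hε n)
      exact ⟨r, fun _ => hr⟩
    · exact ⟨0, fun h => absurd h hx⟩
  choose r hr using step
  let p : ℕ → ErdosSpace := fun n => Nat.rec 0 (fun k pk => pk + single k (r k pk)) n
  have hp_mem (n : ℕ) : p n ∈ S := by
    induction n with
    | zero => exact h0
    | succ n ih => exact (hr n (p n) ih).1
  have hp_sum (n : ℕ) : ∑ k ∈ range n, single k (r k (p k)) = p n := by
    induction n with
    | zero => simp [p]
    | succ n ih => rw [sum_range_succ, ih]
  exact ⟨fun n => r n (p n), fun n => hp_sum n ▸ ⟨hp_mem n, (hr n (p n) (hp_mem n)).2⟩⟩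

theorem not_isBounded_of_isClopen_of_zero_mem {S : Set ErdosSpace} (hS : IsClopen S)
    (h0 : 0 ∈ S) : ¬IsBounded S := by
  intro hbdd
  set ε : ℕ → ℚ := fun n => 1 / (n + 1)
  obtain ⟨c, hc⟩ := exists_sum_single_mem_add_single_notMem hbdd h0 (ε := ε) fun n => by positivity
  obtain ⟨C, hC⟩ := isBounded_iff_forall_norm_le.1 hbdd
  obtain ⟨y, hy⟩ := exists_hasSum_single fun n => hC _ (hc n).1
  have hp : Tendsto (fun n => ∑ k ∈ range n, single k (c k)) atTop (𝓝 y) := hy.tendsto_sum_nat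
  have hyS : y ∈ S := hS.isClosed.mem_of_tendsto hp (.of_forall fun n => (hc n).1)
  have hε : Tendsto (fun n => single n (ε n)) atTop (𝓝 0) := by
    rw [tendsto_zero_iff_norm_tendsto_zero]
    refine (tendsto_one_div_add_atTop_nhds_zero_nat (𝕜 := ℝ)).congr fun n => ?_
    rw [norm_single, abs_of_pos (by positivity)]
    simp [ε]
  have hw : Tendsto (fun n => ∑ k ∈ range n, single k (c k) + single n (c n + ε n))
      atTop (𝓝 y) := by
    simpa [sum_range_succ, add_assoc] using (hp.comp (tendsto_add_atTop_nat 1)).add hε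
  obtain ⟨n, hn⟩ := (hw.eventually (hS.isOpen.mem_nhds hyS)).exists
  exact (hc n).2 hn

theorem not_isBounded_of_isClopen {S : Set ErdosSpace} (hS : IsClopen S) (hne : S.Nonempty) :
    ¬IsBounded S := by
  obtain ⟨x, hx⟩ := hne
  intro hbdd
  refine not_isBounded_of_isClopen_of_zero_mem (S := (· + x) ⁻¹' S)
    (hS.preimage (continuous_add_const x)) (by simpa using hx) ?_
  exact (isometry_add_right x).antilipschitz.isBounded_preimage hbdd

end ErdosSpace

/-- The only bounded clopen subset of Erdős space is the empty set. -/
theorem bounded_clopen_eq_empty (U : Set ErdosSpace) (hU : IsClopen U)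
    (hbdd : ∃ M : ℝ, 0 < M ∧ ∀ x ∈ U, ‖x‖ ≤ M) : U = ∅ := by
  obtain ⟨M, -, hM⟩ := hbdd
  by_contra hne
  exact ErdosSpace.not_isBounded_of_isClopen hU (Set.nonempty_iff_ne_empty.2 hne)
    (isBounded_iff_forall_norm_le.2 ⟨M, hM⟩)
end
end
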